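/- Let μ̂_n(ξ) and μ̂_{n-1}(ξ) denote quantities depending on a randomization variable ξ and on data, and fix ε ≥ 0. If for independent ξ, ξ' ~ Uniform[0,1] (independent of the data) it holds that P(|μ̂_n(ξ)(X) - μ̂_{n-1}(ξ')(X)| > ε) ≤ δ, then using a single shared randomization term, P(|μ̂_n(ξ)(X) - μ̂_{n-1}(ξ)(X)| > 3ε) ≤ 3δ. -/

import Mathlib

/-!
Take three independent copies `x, y, z` of the randomization. By the triangle inequality
`|f x - g x| ≤ |f x - g y| + |f z - g y| + |f z - g x|`, so a gap above `3ε` with shared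
randomization forces a gap above `ε` in one of three pairs of independent copies. Each pair has
the law of two independent uniforms, so a union bound gives `3δ`.
-/

open MeasureTheory

theorem measure_prod_le_three_mul_of_forall_mem {Ω α : Type*} [MeasurableSpace Ω]
    [MeasurableSpace α] (μ : Measure Ω) [SFinite μ] (ν : Measure α) [IsProbabilityMeasure ν]
    {A : Set (Ω × α)} {H : Set (Ω × α × α)} (hA : MeasurableSet A) (hH : MeasurableSet H)
    (hAH : ∀ ω x y z, (ω, x) ∈ A → (ω, x, y) ∈ H ∨ (ω, z, y) ∈ H ∨ (ω, z, x) ∈ H) :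
    μ.prod ν A ≤ 3 * μ.prod (ν.prod ν) H := by
  let P := μ.prod (ν.prod (ν.prod ν))
  let qx : Ω × α × α × α → Ω × α := fun p => (p.1, p.2.1)
  let qxy : Ω × α × α × α → Ω × α × α := fun p => (p.1, p.2.1, p.2.2.1)
  let qzy : Ω × α × α × α → Ω × α × α := fun p => (p.1, p.2.2.2, p.2.2.1)
  let qzx : Ω × α × α × α → Ω × α × α := fun p => (p.1, p.2.2.2, p.2.1)
  have hx : MeasurePreserving qx P (μ.prod ν) :=
    (MeasurePreserving.id μ).prod measurePreserving_fst
  have hxy : MeasurePreserving qxy P (μ.prod (ν.prod ν)) :=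
    (MeasurePreserving.id μ).prod ((MeasurePreserving.id ν).prod measurePreserving_fst)
  have hzy : MeasurePreserving qzy P (μ.prod (ν.prod ν)) :=
    (MeasurePreserving.id μ).prod (Measure.measurePreserving_swap.comp measurePreserving_snd)
  have hzx : MeasurePreserving qzx P (μ.prod (ν.prod ν)) :=
    (MeasurePreserving.id μ).prod
      (Measure.measurePreserving_swap.comp ((MeasurePreserving.id ν).prod measurePreserving_snd))
  calc μ.prod ν A
      = P (qx ⁻¹' A) := (hx.measure_preimage hA.nullMeasurableSet).symm
    _ ≤ P (qxy ⁻¹' H ∪ (qzy ⁻¹' H ∪ qzx ⁻¹' H)) :=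
        measure_mono fun ⟨ω, x, y, z⟩ hp => hAH ω x y z hp
    _ ≤ P (qxy ⁻¹' H) + (P (qzy ⁻¹' H) + P (qzx ⁻¹' H)) :=
        (measure_union_le _ _).trans (add_le_add le_rfl (measure_union_le _ _))
    _ = 3 * μ.prod (ν.prod ν) H := by
        rw [hxy.measure_preimage hH.nullMeasurableSet, hzy.measure_preimage hH.nullMeasurableSet,
          hzx.measure_preimage hH.nullMeasurableSet]
        ring

instance isProbabilityMeasure_volume_restrict_Icc_zero_one :
    IsProbabilityMeasure (volume.restrict (Set.Icc (0 : ℝ) 1)) :=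
  ⟨by simp⟩

theorem stmt14_general {Ω : Type*} [MeasurableSpace Ω] (μ : Measure Ω) [IsProbabilityMeasure μ]
    (f g : Ω → ℝ → ℝ)
    (hf : Measurable (Function.uncurry f)) (hg : Measurable (Function.uncurry g))
    (ε δ : ℝ)
    (h : ((μ.prod ((volume.restrict (Set.Icc (0:ℝ) 1)).prod
          (volume.restrict (Set.Icc (0:ℝ) 1))))
        {p | ε < |f p.1 p.2.1 - g p.1 p.2.2|}).toReal ≤ δ) :
    ((μ.prod (volume.restrict (Set.Icc (0:ℝ) 1)))
        {p | 3 * ε < |f p.1 p.2 - g p.1 p.2|}).toReal ≤ 3 * δ := by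
  have hA : MeasurableSet {p : Ω × ℝ | 3 * ε < |f p.1 p.2 - g p.1 p.2|} :=
    measurableSet_lt measurable_const (hf.sub hg).abs
  have hH : MeasurableSet {p : Ω × ℝ × ℝ | ε < |f p.1 p.2.1 - g p.1 p.2.2|} :=
    measurableSet_lt measurable_const
      ((hf.comp (by fun_prop : Measurable fun p : Ω × ℝ × ℝ => (p.1, p.2.1))).sub
        (hg.comp (by fun_prop : Measurable fun p : Ω × ℝ × ℝ => (p.1, p.2.2)))).abs
  have hcover (ω : Ω) (x y z : ℝ) (hx : 3 * ε < |f ω x - g ω x|) :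
      ε < |f ω x - g ω y| ∨ ε < |f ω z - g ω y| ∨ ε < |f ω z - g ω x| := by
    by_contra! hsmall
    have := abs_sub_le (f ω x) (g ω y) (g ω x)
    have := abs_sub_le (g ω y) (f ω z) (g ω x)
    have := abs_sub_comm (f ω z) (g ω y)
    linarith
  calc _ ≤ (3 * (μ.prod ((volume.restrict (Set.Icc (0:ℝ) 1)).prod
          (volume.restrict (Set.Icc (0:ℝ) 1)))) {p | ε < |f p.1 p.2.1 - g p.1 p.2.2|}).toReal :=
        ENNReal.toReal_mono (by finiteness)
          (measure_prod_le_three_mul_of_forall_mem μ _ hA hH hcover)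
    _ ≤ 3 * δ := by
        rw [ENNReal.toReal_mul]
        norm_num [h]

/-- If stability holds with independent uniform randomization terms ξ ⊥ ξ'
(P(|μ̂ₙ(ξ)(X) - μ̂ₙ₋₁(ξ')(X)| > ε) ≤ δ), then with a single shared randomization term,
P(|μ̂ₙ(ξ)(X) - μ̂ₙ₋₁(ξ)(X)| > 3ε) ≤ 3δ. -/
theorem stmt14 {Ω : Type*} [MeasurableSpace Ω] (μ : Measure Ω) [IsProbabilityMeasure μ]
    (f g : Ω → ℝ → ℝ)
    (hf : Measurable (Function.uncurry f)) (hg : Measurable (Function.uncurry g))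
    (ε δ : ℝ) (hε : 0 ≤ ε) (hδ : 0 ≤ δ)
    (h : ((μ.prod ((volume.restrict (Set.Icc (0:ℝ) 1)).prod
          (volume.restrict (Set.Icc (0:ℝ) 1))))
        {p | ε < |f p.1 p.2.1 - g p.1 p.2.2|}).toReal ≤ δ) :
    ((μ.prod (volume.restrict (Set.Icc (0:ℝ) 1)))
        {p | 3 * ε < |f p.1 p.2 - g p.1 p.2|}).toReal ≤ 3 * δ :=
  stmt14_general μ f g hf hg ε δ h
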